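/- There exists a constant C > 0 such that for every ε ∈ (0, 1/2], every R ≥ 0, every θ ∈ [−π, π] and every ζ ∈ ℂ with max(|ζ|, |θ|) ≤ C·ε·e^{−R}, and every ξ ∈ 𝔻 with |ξ| ≤ (e^R − 1)/(e^R + 1), the Poincaré distance satisfies d_P(ξ, τ_ζ(e^{iθ}·ξ)) ≤ ε. -/

import Mathlib

/-- The inverse hyperbolic tangent. -/
noncomputable def artanh (x : ℝ) : ℝ := Real.log ((1 + x) / (1 - x)) / 2

/-- The Poincaré distance on the unit disc. -/
noncomputable def dP (z w : ℂ) : ℝ :=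
  2 * artanh (‖z - w‖ / ‖1 - (starRingEnd ℂ) w * z‖)

/-- The Möbius automorphism `τ_ζ(ξ) = (ξ + ζ)/(1 + conj(ζ) ξ)` of the unit disc. -/
noncomputable def moebius (ζ ξ : ℂ) : ℂ := (ξ + ζ) / (1 + (starRingEnd ℂ) ζ * ξ)

/-!
With `η = e^{iθ}` and `w = τ_ζ(ηξ)`, the pseudo-hyperbolic distance `ρ = |ξ - w| / |1 - w̄ξ|` is an
explicit quotient whose numerator is at most `|θ| + 2|ζ|` (as `|1 - η| ≤ |θ|`) and whose
denominator is at least `1 - |ξ|² - 2|ζ|`. On the hyperbolic disk of radius `R` we have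
`1 - |ξ|² ≥ e^{-R}`, so `C = 1/16` gives `ρ ≤ ε/4`, and then `d_P = 2 artanh ρ ≤ 2ρ/(1 - ρ) ≤ ε`.
-/

open Complex ComplexConjugate

noncomputable def pseudoHypDist (z w : ℂ) : ℝ := ‖z - w‖ / ‖1 - conj w * z‖

lemma two_mul_artanh_le {ρ : ℝ} (h₀ : -1 < ρ) (h₁ : ρ < 1) :
    2 * artanh ρ ≤ 2 * ρ / (1 - ρ) := by
  have hpos : 0 < (1 + ρ) / (1 - ρ) := div_pos (by linarith) (by linarith)
  have hsub : (1 + ρ) / (1 - ρ) - 1 = 2 * ρ / (1 - ρ) := by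
    field_simp [(by linarith : (1 : ℝ) - ρ ≠ 0)]; ring
  unfold artanh
  linarith [Real.log_le_sub_one_of_pos hpos]

lemma dP_le_of_pseudoHypDist_le {z w : ℂ} {ε : ℝ} (hε : ε ≤ 2)
    (h : pseudoHypDist z w ≤ ε / 4) : dP z w ≤ ε := by
  have h₀ : 0 ≤ pseudoHypDist z w := by unfold pseudoHypDist; positivity
  calc dP z w = 2 * artanh (pseudoHypDist z w) := rfl
    _ ≤ 2 * pseudoHypDist z w / (1 - pseudoHypDist z w) :=
        two_mul_artanh_le (by linarith) (by linarith)
    _ ≤ ε := by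
        rw [div_le_iff₀ (by linarith)]
        nlinarith

lemma pseudoHypDist_moebius (ζ a ξ : ℂ) (ha : 1 + conj ζ * a ≠ 0) :
    pseudoHypDist ξ (moebius ζ a) =
      ‖ξ - a - ζ + conj ζ * a * ξ‖ / ‖1 - conj a * ξ + ζ * conj a - conj ζ * ξ‖ := by
  have ha' : conj (1 + conj ζ * a) ≠ 0 := (map_ne_zero _).mpr ha
  have hnum : ξ - moebius ζ a = (ξ - a - ζ + conj ζ * a * ξ) / (1 + conj ζ * a) := by
    rw [eq_div_iff ha, moebius, sub_mul, div_mul_cancel₀ _ ha]; ring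
  have hden : 1 - conj (moebius ζ a) * ξ =
      (1 - conj a * ξ + ζ * conj a - conj ζ * ξ) / conj (1 + conj ζ * a) := by
    rw [eq_div_iff ha', moebius, map_div₀, sub_mul, div_mul_eq_mul_div, div_mul_cancel₀ _ ha']
    simp only [map_add, map_mul, map_one, conj_conj]
    ring
  rw [pseudoHypDist, hnum, hden, norm_div, norm_div, norm_conj,
    div_div_div_cancel_right₀ (norm_ne_zero_iff.mpr ha)]

lemma pseudoHypDist_moebius_rotate_le (ζ ξ : ℂ) (θ : ℝ) (hξ : ‖ξ‖ ≤ 1)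
    (hζ : 2 * ‖ζ‖ < 1 - ‖ξ‖ ^ 2) :
    pseudoHypDist ξ (moebius ζ (exp (θ * I) * ξ)) ≤
      (|θ| + 2 * ‖ζ‖) / (1 - ‖ξ‖ ^ 2 - 2 * ‖ζ‖) := by
  set η := exp (θ * I)
  have hη : ‖η‖ = 1 := norm_exp_ofReal_mul_I θ
  have hη₁ : ‖1 - η‖ ≤ |θ| := by
    have h := @Real.norm_exp_I_mul_ofReal_sub_one_le θ
    rwa [mul_comm, Real.norm_eq_abs, norm_sub_rev] at h
  have hξ₀ := norm_nonneg ξ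
  have hζ₀ := norm_nonneg ζ
  have hD : 1 + conj ζ * (η * ξ) ≠ 0 := by
    intro h
    have h₁ : conj ζ * (η * ξ) = -1 := by linear_combination h
    have h₂ := congrArg norm h₁
    rw [norm_mul, norm_mul, norm_conj, hη, one_mul, norm_neg, norm_one] at h₂
    nlinarith
  rw [pseudoHypDist_moebius ζ _ ξ hD]
  have hnum : ‖ξ - η * ξ - ζ + conj ζ * (η * ξ) * ξ‖ ≤ |θ| + 2 * ‖ζ‖ :=
    calc ‖ξ - η * ξ - ζ + conj ζ * (η * ξ) * ξ‖
        = ‖(1 - η) * ξ - ζ + conj ζ * η * ξ ^ 2‖ := by ring_nf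
      _ ≤ ‖(1 - η) * ξ‖ + ‖ζ‖ + ‖conj ζ * η * ξ ^ 2‖ :=
        (norm_add_le _ _).trans (add_le_add_left (norm_sub_le _ _) _)
      _ = ‖1 - η‖ * ‖ξ‖ + ‖ζ‖ + ‖ζ‖ * ‖ξ‖ ^ 2 := by
        simp only [norm_mul, norm_pow, norm_conj, hη, mul_one]
      _ ≤ |θ| + 2 * ‖ζ‖ := by nlinarith [mul_le_mul hη₁ hξ hξ₀ (abs_nonneg θ)]
  have hden : 1 - ‖ξ‖ ^ 2 - 2 * ‖ζ‖ ≤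
      ‖1 - conj (η * ξ) * ξ + ζ * conj (η * ξ) - conj ζ * ξ‖ := by
    have h := norm_add₄_le (a := 1 - conj (η * ξ) * ξ + ζ * conj (η * ξ) - conj ζ * ξ)
      (b := conj (η * ξ) * ξ) (c := -(ζ * conj (η * ξ))) (d := conj ζ * ξ)
    rw [show 1 - conj (η * ξ) * ξ + ζ * conj (η * ξ) - conj ζ * ξ + conj (η * ξ) * ξ
        + -(ζ * conj (η * ξ)) + conj ζ * ξ = 1 by ring, norm_one] at h
    simp only [norm_neg, norm_mul, norm_conj, hη, one_mul] at h
    nlinarith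
  exact div_le_div₀ (by positivity) hnum (by linarith) hden

lemma inv_le_one_sub_sq_of_le_div {x r : ℝ} (hx : 1 ≤ x) (hr₀ : 0 ≤ r)
    (hr : r ≤ (x - 1) / (x + 1)) : x⁻¹ ≤ 1 - r ^ 2 := by
  have hr' : r * (x + 1) ≤ x - 1 := (le_div_iff₀ (by linarith)).mp hr
  have hsq : (r * (x + 1)) ^ 2 ≤ (x - 1) ^ 2 := pow_le_pow_left₀ (by positivity) hr' 2
  rw [inv_le_iff_one_le_mul₀ (by linarith)]
  nlinarith [mul_le_mul_of_nonneg_left hsq (by linarith : (0 : ℝ) ≤ x)]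

/-- if `max(|ζ|,|θ|) ≤ C ε e^{-R}`, then `d_P(ξ, τ_ζ(e^{iθ}ξ)) ≤ ε`
on the closed hyperbolic disk of radius `R`. -/
theorem stmt_18 :
    ∃ C : ℝ, 0 < C ∧
      ∀ ε : ℝ, ε ∈ Set.Ioc (0 : ℝ) (1 / 2) → ∀ R : ℝ, 0 ≤ R →
        ∀ θ ∈ Set.Icc (-Real.pi) Real.pi, ∀ ζ : ℂ,
          max ‖ζ‖ |θ| ≤ C * ε * Real.exp (-R) →
          ∀ ξ : ℂ, ‖ξ‖ ≤ (Real.exp R - 1) / (Real.exp R + 1) →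
            dP ξ (moebius ζ (Complex.exp (θ * Complex.I) * ξ)) ≤ ε := by
  refine ⟨1 / 16, by norm_num, ?_⟩
  rintro ε ⟨hε₀, hε⟩ R hR θ - ζ hmax ξ hξ
  have hζ : ‖ζ‖ ≤ 1 / 16 * ε * Real.exp (-R) := (le_max_left _ _).trans hmax
  have hθ : |θ| ≤ 1 / 16 * ε * Real.exp (-R) := (le_max_right _ _).trans hmax
  have hdisk : Real.exp (-R) ≤ 1 - ‖ξ‖ ^ 2 := by
    rw [Real.exp_neg]
    exact inv_le_one_sub_sq_of_le_div (Real.one_le_exp hR) (norm_nonneg ξ) hξ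
  have hE₀ : 0 < Real.exp (-R) := Real.exp_pos _
  have hξ₁ : ‖ξ‖ ≤ 1 := by nlinarith [norm_nonneg ξ]
  have hden : 2 * ‖ζ‖ < 1 - ‖ξ‖ ^ 2 := by nlinarith
  apply dP_le_of_pseudoHypDist_le (by linarith)
  refine (pseudoHypDist_moebius_rotate_le ζ ξ θ hξ₁ hden).trans ?_
  rw [div_le_iff₀ (by linarith)]
  nlinarith [mul_le_mul_of_nonneg_left hdisk hε₀.le,
    mul_le_mul_of_nonneg_left hε (norm_nonneg ζ)]
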